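/- arXiv:2311.16686 — 7 statements merged into one kernel-verified Lean document; each statement's English description precedes it below -/
import Mathlib

section
/- For the SEIR model with all parameters β, s, γ_e, γ_i, μ, δ > 0, set d_e = γ_e + μ, d_i = γ_i + μ + δ and R₀ = β·s·γ_e/(d_e·d_i), and assume R₀ ≥ 1. Then the pair q_i = 1/R₀ and q_e = μ/d_e + (γ_e/d_e)·(1/R₀) satisfies the branching-process extinction fixed-point equations: q_e·d_e = μ + γ_e·q_i and q_i·(β·s + d_i) = β·s·q_i·q_e + d_i. -/
/-! Both equations are rational identities. Multiplied by `R₀`, the second one reduces, via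
`β s γ_e / R₀ = d_e d_i`, to `β s (μ + γ_e) / d_e = β s`, which is the definition of `d_e`. -/

section FixedPoint

variable {K : Type*} [Field K]

theorem exposed_fixedPoint_eq {μ γe de qi : K} (hde : de ≠ 0) :
    (μ / de + γe / de * qi) * de = μ + γe * qi := by
  field_simp

theorem infectious_fixedPoint_eq {b γe μ di R : K} (hR : R = b * γe / ((γe + μ) * di))
    (hR₀ : R ≠ 0) :
    1 / R * (b + di) = b * (1 / R) * (μ / (γe + μ) + γe / (γe + μ) * (1 / R)) + di := by
  subst hR
  obtain ⟨⟨hb, hγe⟩, hde, hdi⟩ : (b ≠ 0 ∧ γe ≠ 0) ∧ γe + μ ≠ 0 ∧ di ≠ 0 := by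
    simpa only [ne_eq, div_eq_zero_iff, mul_eq_zero, not_or] using hR₀
  field_simp
  ring

end FixedPoint

theorem seir_extinction_prob_general (β s γe γi μ δ : ℝ) :
    let de := γe + μ
    let di := γi + μ + δ
    let R₀ := β * s * γe / (de * di)
    let qi := 1 / R₀
    let qe := μ / de + (γe / de) * (1 / R₀)
    1 ≤ R₀ →
      qe * de = μ + γe * qi ∧ qi * (β * s + di) = β * s * qi * qe + di := by
  intro de di R₀ qi qe hR
  have hR₀ : R₀ ≠ 0 := (zero_lt_one.trans_le hR).ne'
  have hde : de ≠ 0 := fun h => hR₀ (by simp [R₀, h])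
  exact ⟨exposed_fixedPoint_eq hde, infectious_fixedPoint_eq rfl hR₀⟩

/-- For the SEIR model with `R₀ = β s γ_e/(d_e d_i) ≥ 1`, the pair
`q_i = 1/R₀`, `q_e = μ/d_e + (γ_e/d_e)·(1/R₀)` satisfies the branching-process
extinction fixed-point equations. -/
theorem seir_extinction_prob (β s γe γi μ δ : ℝ)
    (hβ : 0 < β) (hs : 0 < s) (hγe : 0 < γe) (hγi : 0 < γi) (hμ : 0 < μ) (hδ : 0 < δ) :
    let de := γe + μ
    let di := γi + μ + δ
    let R₀ := β * s * γe / (de * di)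
    let qi := 1 / R₀
    let qe := μ / de + (γe / de) * (1 / R₀)
    1 ≤ R₀ →
      qe * de = μ + γe * qi ∧ qi * (β * s + di) = β * s * qi * qe + di :=
  seir_extinction_prob_general β s γe γi μ δ
end

section
/- For the SEIARW model, let all parameters s, β_i, β_a, β_w, d_e, d_i, d_a, d_w, e_i, e_a, ε_i, ε_a be positive, and consider the 4 × 4 real matrices F with first row (0, s·β_i, s·β_a, s·β_w) and all other rows zero, and V = [[d_e, 0, 0, 0], [−e_i, d_i, 0, 0], [−e_a, 0, d_a, 0], [0, −ε_i, −ε_a, d_w]]. Then the characteristic polynomial of K = F·V⁻¹ equals X³·(X − R₀), where R₀ = (s/d_e)·( β_i·e_i/d_i + β_a·e_a/d_a + (β_w/d_w)·(ε_i·e_i/d_i + ε_a·e_a/d_a) ); in particular R₀ is the unique nonzero eigenvalue of K. -/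
/-!
`F = e₀ bᵀ` has rank one, with `b = s (0, βᵢ, βₐ, β_w)`, so `K = F V⁻¹ = e₀ (bᵀ V⁻¹)` is again
rank one and its characteristic polynomial is `X⁴ - tr K · X³`. The trace is `b ⬝ x`, where
`x = V⁻¹ e₀` is found by forward substitution in the lower triangular system `V x = e₀`;
expanding `b ⬝ x` gives `R₀`.
-/

open Polynomial Matrix

namespace Matrix

variable {n R : Type*} [Fintype n] [DecidableEq n] [CommRing R]

theorem charpoly_vecMulVec_mul_inv (u v : n → R) {V : Matrix n n R} {x : n → R}
    (hV : IsUnit V.det) (hx : V *ᵥ x = u) :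
    (vecMulVec u v * V⁻¹).charpoly = X ^ Fintype.card n - (v ⬝ᵥ x) • X ^ (Fintype.card n - 1) := by
  have hx' : V⁻¹ *ᵥ u = x := by rw [← hx, mulVec_mulVec, nonsing_inv_mul _ hV, one_mulVec]
  rw [vecMulVec_mul, charpoly_vecMulVec, dotProduct_comm, ← dotProduct_mulVec, hx']

end Matrix

theorem seiarw_ngm_charpoly_general (s βi βa βw de di da dw ei ea εi εa : ℝ)
    (hde : 0 < de) (hdi : 0 < di) (hda : 0 < da) (hdw : 0 < dw) :
    let F : Matrix (Fin 4) (Fin 4) ℝ :=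
      !![0, s * βi, s * βa, s * βw;
         0, 0, 0, 0;
         0, 0, 0, 0;
         0, 0, 0, 0]
    let V : Matrix (Fin 4) (Fin 4) ℝ :=
      !![de, 0, 0, 0;
         -ei, di, 0, 0;
         -ea, 0, da, 0;
         0, -εi, -εa, dw]
    let K : Matrix (Fin 4) (Fin 4) ℝ := F * V⁻¹
    let R₀ := (s / de) * (βi * ei / di + βa * ea / da + (βw / dw) * (εi * ei / di + εa * ea / da))
    K.charpoly = X ^ 3 * (X - C R₀) := by
  intro F V K R₀
  have hF : F = vecMulVec ![1, 0, 0, 0] ![0, s * βi, s * βa, s * βw] := by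
    ext i j; fin_cases i <;> fin_cases j <;> simp [F, vecMulVec]
  have hV : IsUnit V.det := by
    have hdet : V.det = de * di * da * dw := by
      simp [V, det_succ_row_zero, Fin.sum_univ_succ, mul_assoc]
    rw [hdet, isUnit_iff_ne_zero]; positivity
  let x : Fin 4 → ℝ :=
    ![1 / de, ei / (de * di), ea / (de * da), (εi * ei / di + εa * ea / da) / (de * dw)]
  have hx : V *ᵥ x = ![1, 0, 0, 0] := by
    ext i; fin_cases i <;> simp [V, x, mulVec, dotProduct, Fin.sum_univ_four] <;> field_simp <;> ring
  have hR₀ : ![0, s * βi, s * βa, s * βw] ⬝ᵥ x = R₀ := by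
    simp only [x, R₀, dotProduct, Fin.sum_univ_four, cons_val_zero, cons_val_one, cons_val,
      zero_mul, zero_add]
    field_simp
  change (F * V⁻¹).charpoly = _
  rw [hF, charpoly_vecMulVec_mul_inv _ _ hV hx, hR₀, Fintype.card_fin, smul_eq_C_mul]
  ring

/-- For the SEIARW model, the characteristic polynomial of the next generation matrix
`K = F * V⁻¹` equals `X³ (X - R₀)`, where
`R₀ = (s/d_e)(β_i e_i/d_i + β_a e_a/d_a + (β_w/d_w)(ε_i e_i/d_i + ε_a e_a/d_a))`;
in particular `R₀` is the unique nonzero eigenvalue of `K`. -/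
theorem seiarw_ngm_charpoly (s βi βa βw de di da dw ei ea εi εa : ℝ)
    (hs : 0 < s) (hβi : 0 < βi) (hβa : 0 < βa) (hβw : 0 < βw)
    (hde : 0 < de) (hdi : 0 < di) (hda : 0 < da) (hdw : 0 < dw)
    (hei : 0 < ei) (hea : 0 < ea) (hεi : 0 < εi) (hεa : 0 < εa) :
    let F : Matrix (Fin 4) (Fin 4) ℝ :=
      !![0, s * βi, s * βa, s * βw;
         0, 0, 0, 0;
         0, 0, 0, 0;
         0, 0, 0, 0]
    let V : Matrix (Fin 4) (Fin 4) ℝ :=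
      !![de, 0, 0, 0;
         -ei, di, 0, 0;
         -ea, 0, da, 0;
         0, -εi, -εa, dw]
    let K : Matrix (Fin 4) (Fin 4) ℝ := F * V⁻¹
    let R₀ := (s / de) * (βi * ei / di + βa * ea / da + (βw / dw) * (εi * ei / di + εa * ea / da))
    K.charpoly = X ^ 3 * (X - C R₀) :=
  seiarw_ngm_charpoly_general s βi βa βw de di da dw ei ea εi εa hde hdi hda hdw
end

section
/- Let all parameters β, β_{xy}, β_{xv}, b, μ_y, μ_v be positive and x > 0, set x_c = μ_y/β_{xy}, R₀ = x/x_c + b·β·x/(μ_v + β_{xv}·x) and R₀' = (x/(2·x_c))·(1 + √(1 + 4·β·b·x_c²/(x·(x·β_{xv} + μ_v)))). Then R₀' < 1 if and only if R₀ < 1. -/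
/-! The next-generation matrix of the second decomposition is `F V⁻¹ = [[A, β x/(μv + βxv x)], [b, 0]]`
with `A = x / xc`, so `R₀'` is its dominant eigenvalue, the positive root of `λ² = A λ + P` where
`P = b β x / (μv + βxv x)`, while `R₀ = A + P`. Since `λ² - A λ - P` is negative at `0`, its
positive root lies below `1` exactly when the polynomial is positive at `1`, i.e. when `A + P < 1`. -/

/-- The larger root of `λ² - a λ - p`. -/
noncomputable def dominantRoot (a p : ℝ) : ℝ := (a + √(a ^ 2 + 4 * p)) / 2

theorem dominantRoot_lt_one_iff {a p : ℝ} (hp : 0 ≤ p) : dominantRoot a p < 1 ↔ a + p < 1 := by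
  unfold dominantRoot
  rcases lt_or_ge a 2 with ha | ha
  · rw [div_lt_one two_pos, ← lt_sub_iff_add_lt', Real.sqrt_lt' (by linarith)]
    constructor <;> intro h <;> nlinarith
  · constructor <;> intro h <;> nlinarith [Real.sqrt_nonneg (a ^ 2 + 4 * p)]

theorem half_mul_one_add_sqrt_eq_dominantRoot {a p : ℝ} (ha : 0 < a) :
    a / 2 * (1 + √(1 + 4 * p / a ^ 2)) = dominantRoot a p := by
  have hscale : a * √(1 + 4 * p / a ^ 2) = √(a ^ 2 + 4 * p) := by
    rw [← Real.sqrt_sq ha.le, ← Real.sqrt_mul (sq_nonneg a), Real.sqrt_sq ha.le]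
    congr 1
    field_simp
  rw [dominantRoot, ← hscale]
  ring

/-- The two basic reproduction numbers `R₀` and `R₀'` arising from the two admissible
`(F,V)` decompositions of the virus–tumor model of Lee et al. determine the same
stability domain: `R₀' < 1 ↔ R₀ < 1`. -/
theorem lee_two_R0_same_stability (β βxy βxv b μy μv x : ℝ)
    (hβ : 0 < β) (hβxy : 0 < βxy) (hβxv : 0 < βxv) (hb : 0 < b)
    (hμy : 0 < μy) (hμv : 0 < μv) (hx : 0 < x) :
    let xc := μy / βxy
    let R₀ := x / xc + b * β * x / (μv + βxv * x)
    let R₀' := (x / (2 * xc)) * (1 + Real.sqrt (1 + 4 * β * b * xc ^ 2 / (x * (x * βxv + μv))))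
    (R₀' < 1 ↔ R₀ < 1) := by
  intro xc R₀ R₀'
  set A := x / xc
  set P := b * β * x / (μv + βxv * x)
  have hxc : 0 < xc := div_pos hμy hβxy
  have hA : 0 < A := div_pos hx hxc
  have hP : 0 ≤ P := by positivity
  have hR₀' : R₀' = dominantRoot A P := by
    rw [← half_mul_one_add_sqrt_eq_dominantRoot hA]
    have hquot : 4 * β * b * xc ^ 2 / (x * (x * βxv + μv)) = 4 * P / A ^ 2 := by
      simp only [A, P]
      field_simp
      ring
    simp only [R₀', hquot, A]
    ring
  rw [hR₀']
  exact dominantRoot_lt_one_iff hP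
end

section
/- For the two-strain SIS model with d_1 = σ_1 + b and d_2 = σ_2 + b, suppose ν_1 ≠ ν_2 and β_1 − β_2 + ν_1 − ν_2 ≠ 0, and define i_1 = (β_1·d_2 − β_2·d_1 − (ν_1 − ν_2)·(β_2 − d_2))/((ν_1 − ν_2)·(β_1 − β_2 + ν_1 − ν_2)), i_2 = (d_1·(β_2 − ν_1 + ν_2) − β_1·(d_2 − ν_1 + ν_2))/((ν_1 − ν_2)·(β_1 − β_2 + ν_1 − ν_2)), and s = 1 − i_1 − i_2. Then i_2·(ν_2 − ν_1) + β_1·s = d_1 and i_1·(ν_1 − ν_2) + β_2·s = d_2; in particular (i_1, i_2, s) is a coexistence equilibrium of the two-strain SIS system. -/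
/-- For the two-strain SIS model with `d₁ = σ₁ + b`, `d₂ = σ₂ + b`, the explicit point
given by the displayed formulas satisfies `i₂(ν₂ − ν₁) + β₁ s = d₁` and
`i₁(ν₁ − ν₂) + β₂ s = d₂`, hence is a coexistence equilibrium. -/
theorem two_strain_sis_coexistence_equilibrium (b σ1 σ2 β1 β2 ν1 ν2 : ℝ)
    (hν : ν1 ≠ ν2) (hden : β1 - β2 + ν1 - ν2 ≠ 0) :
    let d1 := σ1 + b
    let d2 := σ2 + b
    let i1 := (β1 * d2 - β2 * d1 - (ν1 - ν2) * (β2 - d2)) /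
      ((ν1 - ν2) * (β1 - β2 + ν1 - ν2))
    let i2 := (d1 * (β2 - ν1 + ν2) - β1 * (d2 - ν1 + ν2)) /
      ((ν1 - ν2) * (β1 - β2 + ν1 - ν2))
    let s := 1 - i1 - i2
    i2 * (ν2 - ν1) + β1 * s = d1 ∧ i1 * (ν1 - ν2) + β2 * s = d2 := by
  -- Substituting `s = 1 - i1 - i2` turns the two conditions into a linear system in `(i1, i2)`
  -- with determinant `(ν1 - ν2) * (β1 - β2 + ν1 - ν2)`; the formulas are its Cramer solution.
  have hdet : (ν1 - ν2) * (β1 - β2 + ν1 - ν2) ≠ 0 := mul_ne_zero (sub_ne_zero.mpr hν) hden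
  intro d1 d2 i1 i2 s
  constructor <;> · simp only [s, i1, i2]; field_simp; ring
end

section
/- For the two-strain SIS model with ν_1 = 0, ν_2 = ν, parameters b, σ_1, σ_2, β_1, β_2 > 0, ν ≥ 0, R₁ = β_1/(b + σ_1), R₂ = β_2/(b + σ_2), consider the 3 × 3 real matrix J = [[ν − (b + σ_1) + (β_1 − ν)·(b + σ_2)/β_2, 0, 0], [ν·(b + σ_2 − β_2)/β_2, 0, β_2 − b − σ_2], [σ_1 − β_1·(b + σ_2)/β_2, −b, σ_2 − β_2]] (the Jacobian at the strain-2 dominance equilibrium x₂). Then the characteristic polynomial of J equals (X + b)·(X + (b + σ_2)·(R₂ − 1))·(X − c) with c = ν − (b + σ_1) + (β_1 − ν)·(b + σ_2)/β_2, so the eigenvalues of J are −b, −(R₂ − 1)·(b + σ_2), and c; moreover c < 0 if and only if R₁₂ := R₁/R₂ + (ν/(b + σ_1))·(1 − 1/R₂) < 1. -/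
open Polynomial Matrix

/-! The first row of the Jacobian vanishes off the diagonal (strain 1 is absent at `x₂`), so the
characteristic polynomial splits off the factor `X - c` and the `2 × 2` block of the resident
strain, whose trace `-(b + d)` and determinant `b d`, with `d = β₂ - b - σ₂ = (b + σ₂)(R₂ - 1)`,
give the roots `-b` and `-d`. For the threshold, `R₁₂ - 1 = c / (b + σ₁)` identically, so `c` and `R₁₂ - 1` have the same sign. -/

theorem Matrix.charpoly_fin_three_of_row_zero_eq_zero {R : Type*} [CommRing R]
    (A : Matrix (Fin 3) (Fin 3) R) (h01 : A 0 1 = 0) (h02 : A 0 2 = 0) :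
    A.charpoly = (X - C (A 0 0)) * (A.submatrix Fin.succ Fin.succ).charpoly := by
  simp only [charpoly, det_fin_three, det_fin_two, charmatrix_apply_eq, charmatrix_apply_ne, ne_eq,
    Fin.reduceEq, not_false_eq_true, submatrix_apply, Fin.succ_zero_eq_one, Fin.succ_one_eq_two,
    h01, h02, map_zero, neg_zero, zero_mul, sub_zero, add_zero]
  ring

theorem invasion_number_sub_one {b σ1 σ2 β1 β2 ν : ℝ} (hbσ1 : b + σ1 ≠ 0) (hβ2 : β2 ≠ 0) :
    β1 / (b + σ1) / (β2 / (b + σ2)) + ν / (b + σ1) * (1 - 1 / (β2 / (b + σ2))) - 1 =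
      (ν - (b + σ1) + (β1 - ν) * (b + σ2) / β2) / (b + σ1) := by
  field_simp
  ring

theorem two_strain_sis_invasion_jacobian_general (b σ1 σ2 β1 β2 ν : ℝ)
    (hb : 0 < b) (hσ1 : 0 < σ1) (hσ2 : 0 < σ2) (hβ2 : 0 < β2) :
    let R1 := β1 / (b + σ1)
    let R2 := β2 / (b + σ2)
    let c := ν - (b + σ1) + (β1 - ν) * (b + σ2) / β2
    let J : Matrix (Fin 3) (Fin 3) ℝ :=
      !![c, 0, 0;
         ν * (b + σ2 - β2) / β2, 0, β2 - b - σ2;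
         σ1 - β1 * (b + σ2) / β2, -b, σ2 - β2]
    let R12 := R1 / R2 + (ν / (b + σ1)) * (1 - 1 / R2)
    J.charpoly = (X + C b) * (X + C ((b + σ2) * (R2 - 1))) * (X - C c) ∧
      (c < 0 ↔ R12 < 1) := by
  intro R1 R2 c J R12
  have hbσ1 : 0 < b + σ1 := by positivity
  have hR2 : (b + σ2) * (R2 - 1) = β2 - b - σ2 := by
    have hbσ2 : b + σ2 ≠ 0 := by positivity
    simp only [R2]
    field_simp
    ring
  have hblock : (J.submatrix Fin.succ Fin.succ).charpoly = (X + C b) * (X + C (β2 - b - σ2)) := by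
    have htrace : (J.submatrix Fin.succ Fin.succ).trace = -(b + (β2 - b - σ2)) := by
      simp only [J, trace_fin_two, submatrix_apply, Fin.succ_zero_eq_one, Fin.succ_one_eq_two,
        of_apply, cons_val', cons_val_zero, cons_val_one, cons_val, cons_val_fin_one]
      ring
    have hdet : (J.submatrix Fin.succ Fin.succ).det = b * (β2 - b - σ2) := by
      simp only [J, det_fin_two, submatrix_apply, Fin.succ_zero_eq_one, Fin.succ_one_eq_two,
        of_apply, cons_val', cons_val_zero, cons_val_one, cons_val, cons_val_fin_one]
      ring
    rw [charpoly_fin_two, htrace, hdet, map_neg, map_add, map_mul]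
    ring
  refine ⟨?_, ?_⟩
  · rw [charpoly_fin_three_of_row_zero_eq_zero J rfl rfl, hblock, hR2]
    change (X - C c) * _ = _
    ring
  · have hR12 : R12 - 1 = c / (b + σ1) := invasion_number_sub_one hbσ1.ne' hβ2.ne'
    rw [← sub_neg (a := R12), hR12, div_lt_iff₀ hbσ1, zero_mul]

/-- For the two-strain SIS model with `ν₁ = 0`, `ν₂ = ν`, the characteristic polynomial
of the Jacobian at the strain-2 dominance equilibrium factors as
`(X + b)(X + (b + σ₂)(R₂ − 1))(X − c)`, so the eigenvalues are `−b`,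
`−(R₂ − 1)(b + σ₂)` and `c`; moreover `c < 0` iff the invasion number
`R₁₂ = R₁/R₂ + (ν/(b + σ₁))(1 − 1/R₂)` is below 1. -/
theorem two_strain_sis_invasion_jacobian (b σ1 σ2 β1 β2 ν : ℝ)
    (hb : 0 < b) (hσ1 : 0 < σ1) (hσ2 : 0 < σ2) (hβ1 : 0 < β1) (hβ2 : 0 < β2)
    (hν : 0 ≤ ν) :
    let R1 := β1 / (b + σ1)
    let R2 := β2 / (b + σ2)
    let c := ν - (b + σ1) + (β1 - ν) * (b + σ2) / β2
    let J : Matrix (Fin 3) (Fin 3) ℝ :=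
      !![c, 0, 0;
         ν * (b + σ2 - β2) / β2, 0, β2 - b - σ2;
         σ1 - β1 * (b + σ2) / β2, -b, σ2 - β2]
    let R12 := R1 / R2 + (ν / (b + σ1)) * (1 - 1 / R2)
    J.charpoly = (X + C b) * (X + C ((b + σ2) * (R2 - 1))) * (X - C c) ∧
      (c < 0 ↔ R12 < 1) :=
  two_strain_sis_invasion_jacobian_general b σ1 σ2 β1 β2 ν hb hσ1 hσ2 hβ2
end

section
/- In the two-strain dengue model with vaccination of Bulh et al., assume μ, γ_2, β_2, θ_v, α_v > 0 and 0 ≤ ξ ≤ 1, set v = ξ·μ/(θ_v + μ), R₂ = (β_2/(γ_2 + μ))·(1 − ξ + ξ·α_v·θ_v/(θ_v + μ)), and consider the quadratic a·x² + b·x + c with a = α_v, b = μ·α_v·(1 − β_2·(1 − ξ)/(γ_2 + μ)) + μ·(1 − β_2·α_v·θ_v·v/((γ_2 + μ)·(θ_v + μ))), c = μ²·(1 − R₂). Then: (i) if R₂ ≤ 1, the quadratic has no root with positive real part (indeed b > 0 and c ≥ 0); (ii) if R₂ > 1, the quadratic has exactly one positive real root. -/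
/-!
Write `p = β₂/(γ₂ + μ)`, `u = p (1 - ξ)` and `w = p ξ α_v θ_v/(θ_v + μ)`, so that
`R₂ = u + w`, `c = μ² (1 - R₂)` and `b = μ α_v (1 - u) + μ (1 - w μ/(θ_v + μ))`.
If `R₂ ≤ 1` then `1 - u ≥ w ≥ 0` and `w μ/(θ_v + μ) < 1`, so `b > 0` and `c ≥ 0`; a real
quadratic with positive leading coefficient and nonnegative `b`, `c` has no root in the open
right half-plane.
If `R₂ > 1` then `c < 0`, so `√(b² - 4ac) > |b|` and of the two roots `(-b ± √(b² - 4ac))/(2a)`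
exactly one is positive.
-/

theorem re_nonpos_of_quadratic_eq_zero {a b c : ℝ} (ha : 0 < a) (hb : 0 ≤ b) (hc : 0 ≤ c)
    {z : ℂ} (hz : (a : ℂ) * z ^ 2 + b * z + c = 0) : z.re ≤ 0 := by
  have hre : a * (z.re ^ 2 - z.im ^ 2) + b * z.re + c = 0 := by
    simpa [sq] using congrArg Complex.re hz
  have him : z.im * (2 * a * z.re + b) = 0 := by
    have := congrArg Complex.im hz
    simp only [sq, Complex.add_im, Complex.mul_im, Complex.ofReal_re, Complex.ofReal_im,
      Complex.mul_re, Complex.zero_im] at this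
    linear_combination this
  by_contra! hpos
  rcases mul_eq_zero.1 him with hreal | hvertex
  · rw [hreal] at hre
    nlinarith [mul_pos ha (mul_pos hpos hpos)]
  · nlinarith [mul_pos ha hpos]

theorem existsUnique_pos_quadratic_eq_zero {a b c : ℝ} (ha : 0 < a) (hc : c < 0) :
    ∃! x : ℝ, 0 < x ∧ a * x ^ 2 + b * x + c = 0 := by
  set s := √(discrim a b c)
  have hdiscrim : b ^ 2 < discrim a b c := by rw [discrim]; nlinarith
  have hs : discrim a b c = s * s :=
    (Real.mul_self_sqrt ((sq_nonneg b).trans hdiscrim.le)).symm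
  have hbs : b < s := Real.lt_sqrt_of_sq_lt hdiscrim
  have hbs' : -b < s := Real.lt_sqrt_of_sq_lt (by rwa [neg_sq])
  have hroots (x : ℝ) :
      a * x ^ 2 + b * x + c = 0 ↔ x = (-b + s) / (2 * a) ∨ x = (-b - s) / (2 * a) := by
    rw [sq]; exact quadratic_eq_zero_iff ha.ne' hs x
  have hpos_root : 0 < (-b + s) / (2 * a) := div_pos (by linarith) (by positivity)
  refine ⟨(-b + s) / (2 * a), ⟨hpos_root, (hroots _).2 (.inl rfl)⟩, ?_⟩
  rintro x ⟨hx, hx_root⟩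
  rcases (hroots x).1 hx_root with rfl | rfl
  · rfl
  · have : (-b - s) / (2 * a) < 0 := div_neg_of_neg_of_pos (by linarith) (by positivity)
    exact absurd hx this.not_gt

theorem pos_of_add_le_one {μ α u w r : ℝ} (hμ : 0 < μ) (hα : 0 < α) (hw : 0 ≤ w)
    (hu : 0 ≤ u) (huw : u + w ≤ 1) (hr : 0 ≤ r) (hr1 : r < 1) :
    0 < μ * α * (1 - u) + μ * (1 - w * r) := by
  have hwr : w * r < 1 :=
    calc w * r ≤ 1 * r := mul_le_mul_of_nonneg_right (by linarith) hr
      _ < 1 := by rwa [one_mul]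
  exact add_pos_of_nonneg_of_pos (mul_nonneg (by positivity) (by linarith))
    (mul_pos hμ (by linarith))

/-- In the two-strain dengue model with vaccination, the quadratic
`a x² + b x + c` determining the strain-2 force of infection at the endemic point `E₂`
has (i) no root with positive real part when `R₂ ≤ 1` (indeed `b > 0` and `c ≥ 0`),
and (ii) exactly one positive real root when `R₂ > 1`. -/
theorem dengue_vacc_endemic_quadratic (μ γ2 β2 θv αv ξ : ℝ)
    (hμ : 0 < μ) (hγ2 : 0 < γ2) (hβ2 : 0 < β2) (hθv : 0 < θv) (hαv : 0 < αv)
    (hξ0 : 0 ≤ ξ) (hξ1 : ξ ≤ 1) :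
    let v : ℝ := ξ * μ / (θv + μ)
    let R2 : ℝ := (β2 / (γ2 + μ)) * (1 - ξ + ξ * αv * θv / (θv + μ))
    let a : ℝ := αv
    let b : ℝ := μ * αv * (1 - β2 * (1 - ξ) / (γ2 + μ)) +
      μ * (1 - β2 * αv * θv * v / ((γ2 + μ) * (θv + μ)))
    let c : ℝ := μ ^ 2 * (1 - R2)
    (R2 ≤ 1 → 0 < b ∧ 0 ≤ c ∧
        ∀ z : ℂ, (a : ℂ) * z ^ 2 + (b : ℂ) * z + (c : ℂ) = 0 → z.re ≤ 0) ∧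
      (1 < R2 → ∃! x : ℝ, 0 < x ∧ a * x ^ 2 + b * x + c = 0) := by
  intro v R2 a b c
  have hT : 0 < θv + μ := by positivity
  have hu : 0 ≤ β2 * (1 - ξ) / (γ2 + μ) := div_nonneg (mul_nonneg hβ2.le (sub_nonneg.2 hξ1)) (by positivity)
  have hw : 0 ≤ β2 / (γ2 + μ) * (ξ * αv * θv / (θv + μ)) := by positivity
  have hR2 : R2 = β2 * (1 - ξ) / (γ2 + μ) + β2 / (γ2 + μ) * (ξ * αv * θv / (θv + μ)) := by
    simp only [R2]; ring
  have hb : b = μ * αv * (1 - β2 * (1 - ξ) / (γ2 + μ)) +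
      μ * (1 - β2 / (γ2 + μ) * (ξ * αv * θv / (θv + μ)) * (μ / (θv + μ))) := by
    simp only [b, v]; field_simp
  refine ⟨fun hle => ?_, fun hlt => ?_⟩
  · have hb_pos : 0 < b := hb ▸ pos_of_add_le_one hμ hαv hw hu (hR2 ▸ hle) (by positivity)
      ((div_lt_one hT).2 (by linarith))
    have hc : 0 ≤ c := mul_nonneg (sq_nonneg μ) (sub_nonneg.2 hle)
    exact ⟨hb_pos, hc, fun z hz => re_nonpos_of_quadratic_eq_zero hαv hb_pos.le hc hz⟩
  · have hc : c < 0 := mul_neg_of_pos_of_neg (by positivity) (by linarith)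
    exact existsUnique_pos_quadratic_eq_zero hαv hc
end

section
/- In the two-strain dengue model with vaccination, let γ_1, γ_2, μ, β_1, β_2, α_v > 0 and s, z ≥ 0, and consider the 4 × 4 matrices (in compartment order I_1, I_2, Y_2, Y_1) F = [[β_1·s, 0, 0, β_1·s], [0, β_2·s, β_2·s, 0], [0, β_2·z·α_v, β_2·z·α_v, 0], [0, 0, 0, 0]] and V = diag(γ_1 + μ, γ_2 + μ, γ_2 + μ, γ_1 + μ). Then the characteristic polynomial of K = F·V⁻¹ equals X²·(X − β_1·s/(γ_1 + μ))·(X − β_2·(z·α_v + s)/(γ_2 + μ)); in particular the nonzero eigenvalues of K are β_1·s/(γ_1 + μ) and β_2·(z·α_v + s)/(γ_2 + μ). -/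
open Polynomial Matrix

/- Right multiplication by the diagonal matrix `V⁻¹` only rescales the columns of `F`, so `K` has
the same pattern as `F`. That pattern splits into the blocks {I₁, Y₁}, equal to `[[a, a], [0, 0]]`,
and {I₂, Y₂}, the rank-one `[[b, b], [c, c]]` of trace `b + c`; hence the characteristic polynomial
`X² (X - a) (X - (b + c))`. -/

section TwoStrainNGM

variable {R : Type*}

def twoStrainNGM [Zero R] (a b c : R) : Matrix (Fin 4) (Fin 4) R :=
  !![a, 0, 0, a;
     0, b, b, 0;
     0, c, c, 0;
     0, 0, 0, 0]

theorem twoStrainNGM_mul_diagonal [NonUnitalNonAssocSemiring R] (a b c x y : R) :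
    twoStrainNGM a b c * diagonal ![x, y, y, x] = twoStrainNGM (a * x) (b * y) (c * y) := by
  ext i j
  fin_cases i <;> fin_cases j <;> simp [twoStrainNGM, mul_diagonal]

theorem charpoly_twoStrainNGM [CommRing R] (a b c : R) :
    (twoStrainNGM a b c).charpoly = X ^ 2 * (X - C a) * (X - C (b + c)) := by
  rw [twoStrainNGM, charpoly]
  simp [charmatrix_apply, det_succ_row_zero, Fin.sum_univ_succ, Fin.succ_ne_zero]
  ring

end TwoStrainNGM

theorem inv_diagonal_of_ne_zero {n K : Type*} [Fintype n] [DecidableEq n] [Field K]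
    (d : n → K) (hd : ∀ i, d i ≠ 0) : (diagonal d)⁻¹ = diagonal d⁻¹ :=
  inv_eq_left_inv <| by rw [diagonal_mul_diagonal, ← diagonal_one]; simp [hd]

theorem dengue_vacc_ngm_charpoly_general (γ1 γ2 μ β1 β2 αv s z : ℝ)
    (hγ1 : 0 < γ1) (hγ2 : 0 < γ2) (hμ : 0 < μ) :
    let F : Matrix (Fin 4) (Fin 4) ℝ :=
      !![β1 * s, 0, 0, β1 * s;
         0, β2 * s, β2 * s, 0;
         0, β2 * z * αv, β2 * z * αv, 0;
         0, 0, 0, 0]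
    let V : Matrix (Fin 4) (Fin 4) ℝ :=
      !![γ1 + μ, 0, 0, 0;
         0, γ2 + μ, 0, 0;
         0, 0, γ2 + μ, 0;
         0, 0, 0, γ1 + μ]
    let K : Matrix (Fin 4) (Fin 4) ℝ := F * V⁻¹
    K.charpoly = X ^ 2 * (X - C (β1 * s / (γ1 + μ))) * (X - C (β2 * (z * αv + s) / (γ2 + μ))) := by
  intro F V K
  have h1 : γ1 + μ ≠ 0 := by positivity
  have h2 : γ2 + μ ≠ 0 := by positivity
  have hF : F = twoStrainNGM (β1 * s) (β2 * s) (β2 * z * αv) := rfl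
  have hV : V = diagonal ![γ1 + μ, γ2 + μ, γ2 + μ, γ1 + μ] := by
    ext i j
    fin_cases i <;> fin_cases j <;> simp [V]
  have hVinv : V⁻¹ = diagonal ![(γ1 + μ)⁻¹, (γ2 + μ)⁻¹, (γ2 + μ)⁻¹, (γ1 + μ)⁻¹] := by
    rw [hV, inv_diagonal_of_ne_zero _ (by simp [Fin.forall_fin_succ, h1, h2])]
    congr 1
    ext i
    fin_cases i <;> rfl
  have hK : K = twoStrainNGM (β1 * s / (γ1 + μ)) (β2 * s / (γ2 + μ)) (β2 * z * αv / (γ2 + μ)) := by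
    simp only [K, hF, hVinv, twoStrainNGM_mul_diagonal, div_eq_mul_inv]
  rw [hK, charpoly_twoStrainNGM]
  congr 3
  ring

/-- In the two-strain dengue model with vaccination (compartments I₁, I₂, Y₂, Y₁),
the characteristic polynomial of the next generation matrix `K = F * V⁻¹` equals
`X² (X − β₁ s/(γ₁+μ)) (X − β₂(z α_v + s)/(γ₂+μ))`; in particular these two quantities
are the nonzero eigenvalues of `K`. -/
theorem dengue_vacc_ngm_charpoly (γ1 γ2 μ β1 β2 αv s z : ℝ)
    (hγ1 : 0 < γ1) (hγ2 : 0 < γ2) (hμ : 0 < μ) (hβ1 : 0 < β1) (hβ2 : 0 < β2)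
    (hαv : 0 < αv) (hs : 0 ≤ s) (hz : 0 ≤ z) :
    let F : Matrix (Fin 4) (Fin 4) ℝ :=
      !![β1 * s, 0, 0, β1 * s;
         0, β2 * s, β2 * s, 0;
         0, β2 * z * αv, β2 * z * αv, 0;
         0, 0, 0, 0]
    let V : Matrix (Fin 4) (Fin 4) ℝ :=
      !![γ1 + μ, 0, 0, 0;
         0, γ2 + μ, 0, 0;
         0, 0, γ2 + μ, 0;
         0, 0, 0, γ1 + μ]
    let K : Matrix (Fin 4) (Fin 4) ℝ := F * V⁻¹
    K.charpoly = X ^ 2 * (X - C (β1 * s / (γ1 + μ))) * (X - C (β2 * (z * αv + s) / (γ2 + μ))) :=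
  dengue_vacc_ngm_charpoly_general γ1 γ2 μ β1 β2 αv s z hγ1 hγ2 hμ
end
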